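/- arXiv:1712.07035 — 3 statements merged into one kernel-verified Lean document; each statement's English description precedes it below -/
import Mathlib

section
/- (Li-Bland's extension lemma) Let E → M be a vector bundle, ρ: E → TM a bundle map, ⟨·,·⟩ a nondegenerate fibrewise symmetric pairing on E with ρ ∘ ρ* = 0, and let S ⊆ Γ(E) be a subspace of sections generating Γ(E) as a C^∞(M)-module. Suppose ⟦·,·⟧: S × S → S satisfies, for all s₁,s₂,s₃ ∈ S: (1) ⟦s₁,⟦s₂,s₃⟧⟧ = ⟦⟦s₁,s₂⟧,s₃⟧ + ⟦s₂,⟦s₁,s₃⟧⟧; (2) ρ(s₁)⟨s₂,s₃⟩ = ⟨⟦s₁,s₂⟧,s₃⟩ + ⟨s₂,⟦s₁,s₃⟧⟩; (3) ⟦s₁,s₂⟧ + ⟦s₂,s₁⟧ = ρ*d⟨s₁,s₂⟩; (4) ρ⟦s₁,s₂⟧ = [ρ(s₁),ρ(s₂)]. Then there exists a unique extension of ⟦·,·⟧ to a bracket on all of Γ(E) making (E, ρ, ⟨·,·⟩, ⟦·,·⟧) a Courant algebroid. -/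
/-- Li-Bland's extension lemma: Let `E` be a vector bundle (sections form
the `R`-module `E`, `R` the smooth functions), `ρ` a bundle map into vector fields,
`⟨·,·⟩` a nondegenerate symmetric pairing with `ρ ∘ ρ* = 0`, and `S` a subspace
(`ℝ`-submodule) of sections generating `Γ(E)` as a `C^∞(M) = R`-module. If a bracket
`b : S × S → S` satisfies axioms (1)-(4) on `S`, then there is a unique extension to an
(`ℝ`-bilinear) bracket on all of `E` making `(E, ρ, ⟨·,·⟩, ⟦·,·⟧)` a Courant algebroid
(axioms (CA1)-(CA3); (CA4) is then automatic). -/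
theorem libland_extension
    {R E : Type*} [CommRing R] [Algebra ℝ R] [AddCommGroup E] [Module R E]
    [Module ℝ E] [IsScalarTower ℝ R E]
    (ρ : E →ₗ[R] Derivation ℝ R R)
    (pair : E →ₗ[R] E →ₗ[R] R)
    (pair_symm : ∀ e₁ e₂ : E, pair e₁ e₂ = pair e₂ e₁)
    (pair_nondeg : ∀ e : E, (∀ e' : E, pair e e' = 0) → e = 0)
    -- ρ* on (at least) linear 1-forms, and ρ ∘ ρ* = 0:
    (rstar : ((Derivation ℝ R R) → R) → E)
    (hrstar : ∀ θ : (Derivation ℝ R R) → R,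
      (∀ X Y, θ (X + Y) = θ X + θ Y) → (∀ (f : R) X, θ (f • X) = f * θ X) →
      ∀ e : E, pair (rstar θ) e = θ (ρ e))
    (hrho_rstar : ∀ θ : (Derivation ℝ R R) → R,
      (∀ X Y, θ (X + Y) = θ X + θ Y) → (∀ (f : R) X, θ (f • X) = f * θ X) →
      ρ (rstar θ) = 0)
    -- the subspace of sections, generating Γ(E) as a C^∞(M)-module:
    (S : Submodule ℝ E)
    (hgen : Submodule.span R (S : Set E) = ⊤)
    -- the bracket on S and its axioms:
    (b : S → S → S)
    (h1 : ∀ s₁ s₂ s₃ : S, (b s₁ (b s₂ s₃) : E) = b (b s₁ s₂) s₃ + b s₂ (b s₁ s₃))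
    (h2 : ∀ s₁ s₂ s₃ : S,
      ρ (s₁ : E) (pair (s₂ : E) (s₃ : E))
        = pair (b s₁ s₂ : E) (s₃ : E) + pair (s₂ : E) (b s₁ s₃ : E))
    (h3 : ∀ s₁ s₂ : S,
      (b s₁ s₂ : E) + (b s₂ s₁ : E) = rstar (fun X => X (pair (s₁ : E) (s₂ : E))))
    (h4 : ∀ s₁ s₂ : S, ρ (b s₁ s₂ : E) = ⁅ρ (s₁ : E), ρ (s₂ : E)⁆) :
    ∃! B : E → E → E,
      (∀ s₁ s₂ : S, B (s₁ : E) (s₂ : E) = (b s₁ s₂ : E)) ∧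
      -- ℝ-bilinearity of the extended bracket:
      (∀ e₁ e₂ e₃ : E, B (e₁ + e₂) e₃ = B e₁ e₃ + B e₂ e₃) ∧
      (∀ e₁ e₂ e₃ : E, B e₁ (e₂ + e₃) = B e₁ e₂ + B e₁ e₃) ∧
      (∀ (r : ℝ) (e₁ e₂ : E), B (r • e₁) e₂ = r • B e₁ e₂) ∧
      (∀ (r : ℝ) (e₁ e₂ : E), B e₁ (r • e₂) = r • B e₁ e₂) ∧
      -- Courant algebroid axioms:
      (∀ e₁ e₂ e₃ : E, B e₁ (B e₂ e₃) = B (B e₁ e₂) e₃ + B e₂ (B e₁ e₃)) ∧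
      (∀ e₁ e₂ e₃ : E,
        ρ e₁ (pair e₂ e₃) = pair (B e₁ e₂) e₃ + pair e₂ (B e₁ e₃)) ∧
      (∀ e₁ e₂ : E,
        B e₁ e₂ + B e₂ e₁ = rstar (fun X => X (pair e₁ e₂))) := by

  classical
  -- ## basic helpers
  have spanind : ∀ P : E → Prop, (∀ s : S, P s) → P 0 → (∀ x y, P x → P y → P (x + y)) →
      (∀ (f : R) x, P x → P (f • x)) → ∀ e : E, P e := by
    intro P hm h0 ha hs e
    have he : e ∈ Submodule.span R (S : Set E) := by rw [hgen]; trivial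
    induction he using Submodule.span_induction with
    | mem y hy => exact hm ⟨y, hy⟩
    | zero => exact h0
    | add a c _ _ pa pc => exact ha a c pa pc
    | smul f a _ pa => exact hs f a pa
  have hext0 : ∀ x : E, (∀ u : S, pair x u = 0) → x = 0 := by
    intro x hx
    apply pair_nondeg
    intro e'
    have hsub : Submodule.span R (S : Set E) ≤ LinearMap.ker (pair x) := by
      rw [Submodule.span_le]; intro y hy; exact hx ⟨y, hy⟩
    rw [hgen] at hsub
    exact hsub Submodule.mem_top
  have hext : ∀ x y : E, (∀ u : S, pair x u = pair y u) → x = y := by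
    intro x y h
    have h2 := hext0 (x - y) (fun u => by rw [map_sub, LinearMap.sub_apply, h, sub_self])
    exact sub_eq_zero.mp h2
  have hext2 : ∀ x y : E, (∀ e' : E, pair x e' = pair y e') → x = y := by
    intro x y h
    have h2 := pair_nondeg (x - y) (fun e' => by rw [map_sub, LinearMap.sub_apply, h, sub_self])
    exact sub_eq_zero.mp h2
  have leib : ∀ (x : E) (f g : R), ρ x (f * g) = f * ρ x g + g * ρ x f := by
    intro x f g; simpa [smul_eq_mul] using (ρ x).leibniz f g
  have drs : ∀ (p : R) (e : E), pair (rstar fun X => X p) e = ρ e p := by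
    intro p e
    exact hrstar _ (fun X Y => by simp) (fun f X => by simp) e
  have drs' : ∀ (e : E) (p : R), pair e (rstar fun X => X p) = ρ e p := by
    intro e p; rw [pair_symm]; exact drs p e
  have rrs : ∀ p : R, ρ (rstar fun X => X p) = 0 :=
    fun p => hrho_rstar _ (fun X Y => by simp) (fun f X => by simp)
  -- ## the pairing formula for b
  have hb : ∀ s t u : S, pair (b s t : E) u
      = ρ (u : E) (pair (s : E) t) - ρ (t : E) (pair (s : E) u) + pair (s : E) (b t u : E) := by
    intro s t u
    have A := h2 s t u
    have B2 : pair (t : E) (b s u : E) + pair (t : E) (b u s : E)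
        = ρ (t : E) (pair (s : E) u) := by
      have hc := congrArg (fun z => pair (t : E) z) (h3 s u)
      simp only [map_add] at hc
      rw [hc, drs']
    have S1 := pair_symm (t : E) (b u s : E)
    have C := h2 u s t
    have D2 : pair (s : E) (b t u : E) + pair (s : E) (b u t : E)
        = ρ (s : E) (pair (t : E) u) := by
      have hc := congrArg (fun z => pair (s : E) z) (h3 t u)
      simp only [map_add] at hc
      rw [hc, drs']
    linear_combination -A - B2 + S1 - C - D2
  -- ## construction of D (extension of b in its first slot)
  have hDex : ∀ (t : S) (e : E), ∃ y : E, ∀ u : S,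
      pair y u = ρ (u : E) (pair e t) - ρ (t : E) (pair e u) + pair e (b t u : E) := by
    intro t
    apply spanind
    · intro s
      exact ⟨(b s t : E), fun u => hb s t u⟩
    · exact ⟨0, fun u => by simp⟩
    · rintro x y ⟨z, hz⟩ ⟨w, hw⟩
      refine ⟨z + w, fun u => ?_⟩
      simp only [map_add, LinearMap.add_apply]
      linear_combination hz u + hw u
    · rintro f x ⟨z, hz⟩
      refine ⟨f • z - (ρ (t : E) f) • x + (pair x (t : E)) • rstar (fun X => X f), fun u => ?_⟩
      simp only [map_add, map_sub, map_smul, LinearMap.add_apply, LinearMap.sub_apply,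
        LinearMap.smul_apply, smul_eq_mul]
      rw [drs, leib (u : E) f (pair x (t : E)), leib (t : E) f (pair x (u : E))]
      linear_combination f * hz u
  choose Dm hD using hDex
  -- key consistency formula for D
  have key : ∀ (e : E) (t u : S),
      pair (Dm t e) u = ρ e (pair (t : E) u) - pair (t : E) (Dm u e) := by
    intro e t u
    have h3p : pair e (b t u : E) + pair e (b u t : E) = ρ e (pair (t : E) u) := by
      have hc := congrArg (fun z => pair e z) (h3 t u)
      simp only [map_add] at hc
      rw [hc, drs']
    have S1 := pair_symm (t : E) (Dm u e)
    linear_combination hD t e u + S1 + hD u e t + h3p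
  -- ## construction of B (extension in the second slot)
  have hBex : ∀ (e₁ e₂ : E), ∃ z : E, ∀ u : S,
      pair z u = ρ e₁ (pair e₂ u) - pair e₂ (Dm u e₁) := by
    intro e₁
    apply spanind
    · intro t
      exact ⟨Dm t e₁, fun u => key e₁ t u⟩
    · exact ⟨0, fun u => by simp⟩
    · rintro x y ⟨z, hz⟩ ⟨w, hw⟩
      refine ⟨z + w, fun u => ?_⟩
      simp only [map_add, LinearMap.add_apply]
      linear_combination hz u + hw u
    · rintro f x ⟨z, hz⟩
      refine ⟨f • z + (ρ e₁ f) • x, fun u => ?_⟩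
      simp only [map_add, map_smul, LinearMap.add_apply, LinearMap.smul_apply, smul_eq_mul]
      rw [leib e₁ f (pair x (u : E))]
      linear_combination f * hz u
  choose Bm hB using hBex
  -- ## first properties of B
  have hBD : ∀ (e : E) (t : S), Bm e (t : E) = Dm t e := by
    intro e t
    apply hext
    intro u
    rw [hB, key]
  have hDS : ∀ (s t : S), Dm t (s : E) = (b s t : E) := by
    intro s t
    apply hext
    intro u
    rw [hD, hb]
  have hBb : ∀ s t : S, Bm (s : E) (t : E) = (b s t : E) := by
    intro s t
    apply hext
    intro u
    rw [hB, hDS]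
    linear_combination h2 s t u
  -- additivity / modules rules
  have hDadd : ∀ (t : S) (x y : E), Dm t (x + y) = Dm t x + Dm t y := by
    intro t x y
    apply hext
    intro u
    simp only [map_add, LinearMap.add_apply, hD]
    ring
  have hDsm : ∀ (t : S) (f : R) (x : E), Dm t (f • x)
      = f • Dm t x - (ρ (t : E) f) • x + (pair x (t : E)) • rstar (fun X => X f) := by
    intro t f x
    apply hext
    intro u
    simp only [map_add, map_sub, map_smul, LinearMap.add_apply, LinearMap.sub_apply,
      LinearMap.smul_apply, smul_eq_mul, hD]
    rw [drs, leib (u : E) f (pair x (t : E)), leib (t : E) f (pair x (u : E))]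
    ring
  have hDzero : ∀ t : S, Dm t (0 : E) = 0 := by
    intro t
    apply hext
    intro u
    simp [hD]
  have hBadd1 : ∀ (x y e₂ : E), Bm (x + y) e₂ = Bm x e₂ + Bm y e₂ := by
    intro x y e₂
    apply hext
    intro u
    simp only [map_add, LinearMap.add_apply, Derivation.add_apply, hB, hDadd]
    ring
  have hBadd2 : ∀ (e₁ x y : E), Bm e₁ (x + y) = Bm e₁ x + Bm e₁ y := by
    intro e₁ x y
    apply hext
    intro u
    simp only [map_add, LinearMap.add_apply, hB]
    ring
  have hBsm2 : ∀ (e₁ : E) (f : R) (x : E), Bm e₁ (f • x) = f • Bm e₁ x + (ρ e₁ f) • x := by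
    intro e₁ f x
    apply hext
    intro u
    simp only [map_add, map_smul, LinearMap.add_apply, LinearMap.smul_apply, smul_eq_mul, hB]
    rw [leib e₁ f (pair x (u : E))]
    ring
  have hBsm1 : ∀ (f : R) (x e₂ : E), Bm (f • x) e₂
      = f • Bm x e₂ - (ρ e₂ f) • x + (pair x e₂) • rstar (fun X => X f) := by
    intro f x e₂
    apply hext
    intro u
    simp only [map_add, map_sub, map_smul, LinearMap.add_apply, LinearMap.sub_apply,
      LinearMap.smul_apply, Derivation.add_apply, Derivation.smul_apply, smul_eq_mul, hB, hDsm]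
    rw [drs, drs', pair_symm x e₂]
    ring
  have hBzero1 : ∀ e : E, Bm 0 e = 0 := by
    intro e
    apply hext
    intro u
    simp [hB, hDzero]
  have hBzero2 : ∀ e : E, Bm e 0 = 0 := by
    intro e
    apply hext
    intro u
    simp [hB]
  have hBneg2 : ∀ (e x : E), Bm e (-x) = -Bm e x := by
    intro e x
    have h := hBadd2 e x (-x)
    rw [add_neg_cancel, hBzero2] at h
    exact (neg_eq_of_add_eq_zero_right h.symm).symm
  have hBneg1 : ∀ (x e : E), Bm (-x) e = -Bm x e := by
    intro x e
    have h := hBadd1 x (-x) e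
    rw [add_neg_cancel, hBzero1] at h
    exact (neg_eq_of_add_eq_zero_right h.symm).symm
  have hBsub1 : ∀ (x y e : E), Bm (x - y) e = Bm x e - Bm y e := by
    intro x y e
    rw [sub_eq_add_neg, hBadd1, hBneg1, sub_eq_add_neg]
  have hBsub2 : ∀ (e x y : E), Bm e (x - y) = Bm e x - Bm e y := by
    intro e x y
    rw [sub_eq_add_neg, hBadd2, hBneg2, sub_eq_add_neg]
  -- ## CA2 in full generality
  have CA2 : ∀ e₁ e₂ e₃ : E,
      ρ e₁ (pair e₂ e₃) = pair (Bm e₁ e₂) e₃ + pair e₂ (Bm e₁ e₃) := by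
    have main : ∀ e₃ : E, ∀ e₁ e₂ : E,
        ρ e₁ (pair e₂ e₃) = pair (Bm e₁ e₂) e₃ + pair e₂ (Bm e₁ e₃) := by
      apply spanind
      · intro u e₁ e₂
        rw [hBD e₁ u]
        linear_combination -hB e₁ e₂ u
      · intro e₁ e₂
        simp [hBzero2]
      · intro x y px py e₁ e₂
        simp only [map_add, LinearMap.add_apply, hBadd2]
        linear_combination px e₁ e₂ + py e₁ e₂
      · intro f x px e₁ e₂
        simp only [map_add, map_smul, LinearMap.add_apply, LinearMap.smul_apply,
          smul_eq_mul, hBsm2]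
        rw [leib e₁ f (pair e₂ x)]
        linear_combination f * px e₁ e₂
    exact fun e₁ e₂ e₃ => main e₃ e₁ e₂
  -- ## symmetric identity and CA3
  have Hsym : ∀ (u : S) (e₁ e₂ : E),
      pair e₂ (Bm e₁ u) + pair e₁ (Bm e₂ u)
        = ρ e₁ (pair e₂ u) + ρ e₂ (pair e₁ u) - ρ (u : E) (pair e₁ e₂) := by
    intro u
    have main : ∀ e₂ : E, ∀ e₁ : E,
        pair e₂ (Bm e₁ u) + pair e₁ (Bm e₂ u)
          = ρ e₁ (pair e₂ u) + ρ e₂ (pair e₁ u) - ρ (u : E) (pair e₁ e₂) := by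
      apply spanind
      · intro t e₁
        rw [hBD e₁ u, hBb t u]
        have h3p : pair e₁ (b u t : E) + pair e₁ (b t u : E) = ρ e₁ (pair (u : E) t) := by
          have hc := congrArg (fun z => pair e₁ z) (h3 u t)
          simp only [map_add] at hc
          rw [hc, drs']
        have S1 := pair_symm (t : E) (Dm u e₁)
        have S2 := pair_symm (u : E) (t : E)
        have S3 := congrArg (ρ e₁) S2
        linear_combination S1 + hD u e₁ t + h3p + S3
      · intro e₁
        simp [hBzero1]
      · intro x y px py e₁
        simp only [map_add, LinearMap.add_apply, Derivation.add_apply, hBadd1]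
        linear_combination px e₁ + py e₁
      · intro f x px e₁
        simp only [map_add, map_smul, LinearMap.add_apply, LinearMap.smul_apply,
          Derivation.add_apply, Derivation.smul_apply, smul_eq_mul, hBsm1, map_sub,
          LinearMap.sub_apply]
        rw [drs', leib e₁ f (pair x (u : E)), leib (u : E) f (pair e₁ x)]
        linear_combination f * px e₁
    exact fun e₁ e₂ => main e₂ e₁
  have CA3 : ∀ e₁ e₂ : E, Bm e₁ e₂ + Bm e₂ e₁ = rstar (fun X => X (pair e₁ e₂)) := by
    intro e₁ e₂
    apply hext
    intro u
    rw [map_add, LinearMap.add_apply, drs]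
    have k1 := hB e₁ e₂ u
    have k2 := hB e₂ e₁ u
    rw [← hBD e₁ u] at k1
    rw [← hBD e₂ u] at k2
    have hs := Hsym u e₁ e₂
    linear_combination k1 + k2 - hs
  -- ## anchor property
  have An : ∀ (e₁ e₂ : E) (p : R),
      ρ (Bm e₁ e₂) p = ρ e₁ (ρ e₂ p) - ρ e₂ (ρ e₁ p) := by
    have A1 : ∀ e₂ : E, ∀ (s : S) (p : R),
        ρ (Bm (s : E) e₂) p = ρ (s : E) (ρ e₂ p) - ρ e₂ (ρ (s : E) p) := by
      apply spanind
      · intro t s p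
        rw [hBb s t, h4 s t, Derivation.commutator_apply]
      · intro s p
        simp [hBzero2]
      · intro x y px py s p
        simp only [hBadd2, map_add, LinearMap.add_apply, Derivation.add_apply]
        linear_combination px s p + py s p
      · intro f x px s p
        simp only [hBsm2, map_add, map_smul, LinearMap.add_apply, LinearMap.smul_apply,
          Derivation.add_apply, Derivation.smul_apply, smul_eq_mul]
        rw [leib (s : E) f (ρ x p)]
        linear_combination f * px s p
    have main : ∀ e₁ : E, ∀ (e₂ : E) (p : R),
        ρ (Bm e₁ e₂) p = ρ e₁ (ρ e₂ p) - ρ e₂ (ρ e₁ p) := by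
      apply spanind
      · intro s e₂ p
        exact A1 e₂ s p
      · intro e₂ p
        simp [hBzero1]
      · intro x y px py e₂ p
        simp only [hBadd1, map_add, LinearMap.add_apply, Derivation.add_apply]
        linear_combination px e₂ p + py e₂ p
      · intro f x px e₂ p
        simp only [hBsm1, map_add, map_sub, map_smul, LinearMap.add_apply,
          LinearMap.sub_apply, LinearMap.smul_apply, Derivation.add_apply,
          Derivation.sub_apply, Derivation.smul_apply, smul_eq_mul, rrs]
        rw [leib e₂ f (ρ x p)]
        simp only [Derivation.zero_apply]
        linear_combination f * px e₂ p
    exact main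

  -- ## brackets with exact elements
  have hBrs : ∀ (e : E) (p : R), Bm e (rstar fun X => X p) = rstar (fun X => X (ρ e p)) := by
    intro e p
    apply hext
    intro u
    rw [hB]
    simp only [drs]
    rw [← hBD e u]
    linear_combination -An e (u : E) p
  have hrsB : ∀ (p : R) (e : E), Bm (rstar fun X => X p) e = 0 := by
    intro p e
    have hc := CA3 (rstar fun X => X p) e
    have hfun : (fun X : Derivation ℝ R R => X (pair (rstar fun X => X p) e))
        = fun X : Derivation ℝ R R => X (ρ e p) := by
      funext X; rw [drs]
    rw [hfun, ← hBrs e p] at hc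
    exact add_eq_right.mp hc
  -- ## Jacobi identity steps
  have Jsm3 : ∀ (e₁ e₂ : E) (f : R) (x : E),
      Bm e₁ (Bm e₂ x) = Bm (Bm e₁ e₂) x + Bm e₂ (Bm e₁ x) →
      Bm e₁ (Bm e₂ (f • x)) = Bm (Bm e₁ e₂) (f • x) + Bm e₂ (Bm e₁ (f • x)) := by
    intro e₁ e₂ f x h
    rw [hBsm2 e₂ f x, hBadd2, hBsm2 e₁ f (Bm e₂ x), hBsm2 e₁ (ρ e₂ f) x,
      hBsm2 (Bm e₁ e₂) f x, hBsm2 e₁ f x, hBadd2 e₂, hBsm2 e₂ f (Bm e₁ x),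
      hBsm2 e₂ (ρ e₁ f) x, h, An e₁ e₂ f]
    module
  have Jsm2 : ∀ (e₁ e₃ : E) (f : R) (x : E),
      Bm e₁ (Bm x e₃) = Bm (Bm e₁ x) e₃ + Bm x (Bm e₁ e₃) →
      Bm e₁ (Bm (f • x) e₃) = Bm (Bm e₁ (f • x)) e₃ + Bm (f • x) (Bm e₁ e₃) := by
    intro e₁ e₃ f x h
    rw [hBsm1 f x e₃, hBadd2 e₁, hBsub2 e₁, hBsm2 e₁ f (Bm x e₃), hBsm2 e₁ (ρ e₃ f) x,
      hBsm2 e₁ (pair x e₃) (rstar fun X => X f), hBrs e₁ f,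
      hBsm2 e₁ f x, hBadd1, hBsm1 f (Bm e₁ x) e₃, hBsm1 (ρ e₁ f) x e₃,
      hBsm1 f x (Bm e₁ e₃), h, An e₁ e₃ f, CA2 e₁ x e₃]
    module
  have Jsm1 : ∀ (e₂ e₃ : E) (f : R) (x : E),
      Bm x (Bm e₂ e₃) = Bm (Bm x e₂) e₃ + Bm e₂ (Bm x e₃) →
      Bm (f • x) (Bm e₂ e₃) = Bm (Bm (f • x) e₂) e₃ + Bm e₂ (Bm (f • x) e₃) := by
    intro e₂ e₃ f x h
    have hCA3x : Bm e₂ x = rstar (fun X => X (pair x e₂)) - Bm x e₂ :=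
      (eq_sub_of_add_eq (by rw [add_comm]; exact CA3 x e₂))
    rw [hBsm1 f x (Bm e₂ e₃),
      hBsm1 f x e₂, hBadd1, hBsub1, hBsm1 f (Bm x e₂) e₃, hBsm1 (ρ e₂ f) x e₃,
      hBsm1 (pair x e₂) (rstar fun X => X f) e₃, hrsB f e₃, drs f e₃,
      hBsm1 f x e₃, hBadd2 e₂, hBsub2 e₂, hBsm2 e₂ f (Bm x e₃), hBsm2 e₂ (ρ e₃ f) x,
      hBsm2 e₂ (pair x e₃) (rstar fun X => X f), hBrs e₂ f,
      h, An e₂ e₃ f, CA2 e₂ x e₃, hCA3x]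
    simp only [map_sub, LinearMap.sub_apply, drs]
    module
  have Jadd1 : ∀ (x y e₂ e₃ : E),
      Bm x (Bm e₂ e₃) = Bm (Bm x e₂) e₃ + Bm e₂ (Bm x e₃) →
      Bm y (Bm e₂ e₃) = Bm (Bm y e₂) e₃ + Bm e₂ (Bm y e₃) →
      Bm (x + y) (Bm e₂ e₃) = Bm (Bm (x + y) e₂) e₃ + Bm e₂ (Bm (x + y) e₃) := by
    intro x y e₂ e₃ hx hy
    rw [hBadd1 x y (Bm e₂ e₃), hBadd1 x y e₂, hBadd1 x y e₃,
      hBadd1 (Bm x e₂) (Bm y e₂) e₃, hBadd2 e₂ (Bm x e₃) (Bm y e₃), hx, hy]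
    abel
  have Jadd2 : ∀ (e₁ x y e₃ : E),
      Bm e₁ (Bm x e₃) = Bm (Bm e₁ x) e₃ + Bm x (Bm e₁ e₃) →
      Bm e₁ (Bm y e₃) = Bm (Bm e₁ y) e₃ + Bm y (Bm e₁ e₃) →
      Bm e₁ (Bm (x + y) e₃) = Bm (Bm e₁ (x + y)) e₃ + Bm (x + y) (Bm e₁ e₃) := by
    intro e₁ x y e₃ hx hy
    rw [hBadd1 x y e₃, hBadd2 e₁ (Bm x e₃) (Bm y e₃), hBadd2 e₁ x y,
      hBadd1 (Bm e₁ x) (Bm e₁ y) e₃, hBadd1 x y (Bm e₁ e₃), hx, hy]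
    abel
  have Jadd3 : ∀ (e₁ e₂ x y : E),
      Bm e₁ (Bm e₂ x) = Bm (Bm e₁ e₂) x + Bm e₂ (Bm e₁ x) →
      Bm e₁ (Bm e₂ y) = Bm (Bm e₁ e₂) y + Bm e₂ (Bm e₁ y) →
      Bm e₁ (Bm e₂ (x + y)) = Bm (Bm e₁ e₂) (x + y) + Bm e₂ (Bm e₁ (x + y)) := by
    intro e₁ e₂ x y hx hy
    rw [hBadd2 e₂ x y, hBadd2 e₁ (Bm e₂ x) (Bm e₂ y), hBadd2 (Bm e₁ e₂) x y,
      hBadd2 e₁ x y, hBadd2 e₂ (Bm e₁ x) (Bm e₁ y), hx, hy]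
    abel
  have main3 : ∀ e₃ : E, ∀ s₁ s₂ : S,
      Bm (s₁ : E) (Bm (s₂ : E) e₃) = Bm (Bm (s₁ : E) (s₂ : E)) e₃ + Bm (s₂ : E) (Bm (s₁ : E) e₃) := by
    apply spanind
    · intro t s₁ s₂
      rw [hBb s₂ t, hBb s₁ (b s₂ t), hBb s₁ t, hBb s₂ (b s₁ t), hBb s₁ s₂, hBb (b s₁ s₂) t]
      exact h1 s₁ s₂ t
    · intro s₁ s₂
      simp [hBzero2]
    · intro x y px py s₁ s₂
      exact Jadd3 _ _ x y (px s₁ s₂) (py s₁ s₂)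
    · intro f x px s₁ s₂
      exact Jsm3 _ _ f x (px s₁ s₂)
  have main2 : ∀ e₂ : E, ∀ (s₁ : S) (e₃ : E),
      Bm (s₁ : E) (Bm e₂ e₃) = Bm (Bm (s₁ : E) e₂) e₃ + Bm e₂ (Bm (s₁ : E) e₃) := by
    apply spanind
    · intro t s₁ e₃
      exact main3 e₃ s₁ t
    · intro s₁ e₃
      simp [hBzero1, hBzero2]
    · intro x y px py s₁ e₃
      exact Jadd2 _ x y _ (px s₁ e₃) (py s₁ e₃)
    · intro f x px s₁ e₃
      exact Jsm2 _ _ f x (px s₁ e₃)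
  have CA1 : ∀ e₁ e₂ e₃ : E,
      Bm e₁ (Bm e₂ e₃) = Bm (Bm e₁ e₂) e₃ + Bm e₂ (Bm e₁ e₃) := by
    have main1 : ∀ e₁ : E, ∀ e₂ e₃ : E,
        Bm e₁ (Bm e₂ e₃) = Bm (Bm e₁ e₂) e₃ + Bm e₂ (Bm e₁ e₃) := by
      apply spanind
      · intro s₁ e₂ e₃
        exact main2 e₂ s₁ e₃
      · intro e₂ e₃
        simp [hBzero1, hBzero2]
      · intro x y px py e₂ e₃
        exact Jadd1 x y _ _ (px e₂ e₃) (py e₂ e₃)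
      · intro f x px e₂ e₃
        exact Jsm1 _ _ f x (px e₂ e₃)
    exact main1
  -- ## real-scalar rules
  have rstar0 : rstar (fun _ : Derivation ℝ R R => (0 : R)) = 0 := by
    refine hext2 _ 0 (fun e' => ?_)
    rw [hrstar _ (by simp) (by simp) e', map_zero, LinearMap.zero_apply]
  have halg : ∀ (r : ℝ) (x : E), (algebraMap ℝ R r) • x = r • x := fun r x => algebraMap_smul R r x
  have hfz : ∀ r : ℝ, (fun X : Derivation ℝ R R => X (algebraMap ℝ R r)) = fun _ => (0 : R) := by
    intro r; funext X; exact X.map_algebraMap r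
  have hBr1 : ∀ (r : ℝ) (e₁ e₂ : E), Bm (r • e₁) e₂ = r • Bm e₁ e₂ := by
    intro r e₁ e₂
    rw [← halg r e₁, hBsm1, (ρ e₂).map_algebraMap r, hfz r, rstar0, zero_smul, sub_zero,
      smul_zero, add_zero, halg]
  have hBr2 : ∀ (r : ℝ) (e₁ e₂ : E), Bm e₁ (r • e₂) = r • Bm e₁ e₂ := by
    intro r e₁ e₂
    rw [← halg r e₂, hBsm2, (ρ e₁).map_algebraMap r, zero_smul, add_zero, halg]
  -- ## assembly
  refine ⟨Bm, ⟨hBb, fun e₁ e₂ e₃ => hBadd1 e₁ e₂ e₃, fun e₁ e₂ e₃ => hBadd2 e₁ e₂ e₃,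
    hBr1, hBr2, CA1, CA2, CA3⟩, ?_⟩
  rintro B' ⟨hb', hadd1', hadd2', -, -, -, hca2', hca3'⟩
  have hB'z2 : ∀ e : E, B' e 0 = 0 := by
    intro e
    have h := hadd2' e 0 0
    rw [add_zero] at h
    have h2 : B' e 0 + 0 = B' e 0 + B' e 0 := by rw [add_zero]; exact h
    exact (add_left_cancel h2).symm
  have hB'sm2 : ∀ (e₁ : E) (f : R) (x : E), B' e₁ (f • x) = f • B' e₁ x + (ρ e₁ f) • x := by
    intro e₁ f x
    apply hext2
    intro e'
    have c1 := hca2' e₁ (f • x) e'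
    have c2 := hca2' e₁ x e'
    simp only [map_add, map_smul, LinearMap.add_apply, LinearMap.smul_apply, smul_eq_mul] at c1 ⊢
    rw [leib e₁ f (pair x e')] at c1
    linear_combination -c1 + f * c2
  have P2 : ∀ x : E, ∀ s : S, B' (s : E) x = Bm (s : E) x := by
    apply spanind
    · intro t s
      rw [hb' s t, hBb s t]
    · intro s
      rw [hB'z2, hBzero2]
    · intro x y px py s
      rw [hadd2', hBadd2, px s, py s]
    · intro f x px s
      rw [hB'sm2, hBsm2, px s]
  have P1 : ∀ e₁ : E, ∀ e₂ : E, B' e₁ e₂ = Bm e₁ e₂ := by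
    apply spanind
    · intro s e₂
      exact P2 e₂ s
    · intro e₂
      have h := hadd1' 0 0 e₂
      rw [add_zero] at h
      have h2 : B' 0 e₂ + 0 = B' 0 e₂ + B' 0 e₂ := by rw [add_zero]; exact h
      rw [(add_left_cancel h2).symm, hBzero1]
    · intro x y px py e₂
      rw [hadd1', hBadd1, px e₂, py e₂]
    · intro f x px e₂
      have hB'yx : ∀ y : E, B' y x = Bm y x := by
        intro y
        have heq : B' x y + B' y x = Bm x y + Bm y x := by rw [hca3' x y, CA3 x y]
        rw [px y] at heq
        exact add_left_cancel heq
      have e1 : B' (f • x) e₂ = rstar (fun X => X (pair (f • x) e₂)) - B' e₂ (f • x) :=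
        eq_sub_of_add_eq (hca3' (f • x) e₂)
      have e2 : Bm (f • x) e₂ = rstar (fun X => X (pair (f • x) e₂)) - Bm e₂ (f • x) :=
        eq_sub_of_add_eq (CA3 (f • x) e₂)
      rw [e1, e2, hB'sm2, hBsm2, hB'yx e₂]
  funext e₁ e₂
  exact P1 e₁ e₂
end

section
/- Let (Q → M, ρ_Q) be an anchored vector bundle with a Dorfman connection Δ on Q* and dual dull bracket ⟦·,·⟧_Δ on Γ(Q). Then for all q₁,q₂,q₃ ∈ Γ(Q) and τ ∈ Γ(Q*), one has ⟨τ, Jac(q₁,q₂,q₃)⟩ = ⟨R_Δ(q₁,q₂)τ, q₃⟩, where Jac(q₁,q₂,q₃) = ⟦⟦q₁,q₂⟧_Δ, q₃⟧_Δ + ⟦q₂, ⟦q₁,q₃⟧_Δ⟧_Δ − ⟦q₁, ⟦q₂,q₃⟧_Δ⟧_Δ is the Jacobiator in Leibniz form and R_Δ(q,q') = Δ_qΔ_{q'} − Δ_{q'}Δ_q − Δ_{⟦q,q'⟧_Δ} is the curvature. Consequently, Δ is flat if and only if ⟦·,·⟧_Δ satisfies the Jacobi identity in Leibniz form. -/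
/-- For a Dorfman connection `Δ` on `Q*` with dual dull bracket `⟦·,·⟧_Δ`,
one has `⟨τ, Jac(q₁,q₂,q₃)⟩ = ⟨R_Δ(q₁,q₂)τ, q₃⟩`, where `Jac` is the Jacobiator in
Leibniz form and `R_Δ(q,q') = Δ_qΔ_{q'} − Δ_{q'}Δ_q − Δ_{⟦q,q'⟧_Δ}` is the curvature.
Consequently `Δ` is flat if and only if `⟦·,·⟧_Δ` satisfies the Jacobi identity in
Leibniz form. -/
theorem dorfman_curvature_jacobiator
    {R Q Qd : Type*} [CommRing R] [Algebra ℝ R]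
    [AddCommGroup Q] [Module R Q] [AddCommGroup Qd] [Module R Qd]
    (ρ : Q →ₗ[R] Derivation ℝ R R)
    (p : Q →ₗ[R] Qd →ₗ[R] R)
    (p_nondeg_left : ∀ q : Q, (∀ τ : Qd, p q τ = 0) → q = 0)
    (p_nondeg_right : ∀ τ : Qd, (∀ q : Q, p q τ = 0) → τ = 0)
    (rd : R → Qd) (hrd : ∀ (q : Q) (f : R), p q (rd f) = ρ q f)
    (Δ : Q → Qd → Qd)
    (Δ_add_left : ∀ q q' τ, Δ (q + q') τ = Δ q τ + Δ q' τ)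
    (Δ_add_right : ∀ q τ τ', Δ q (τ + τ') = Δ q τ + Δ q τ')
    (Δ_der : ∀ (q : Q) (f : R) (τ : Qd), Δ q (f • τ) = f • Δ q τ + (ρ q f) • τ)
    (Δ_fun : ∀ (f : R) (q : Q) (τ : Qd),
      Δ (f • q) τ = f • Δ q τ + (p q τ) • rd f)
    (Δ_d : ∀ (q : Q) (f : R), Δ q (rd f) = rd (ρ q f))
    (br : Q → Q → Q)
    (hbr : ∀ (q₁ q₂ : Q) (τ : Qd),
      p (br q₁ q₂) τ = ρ q₁ (p q₂ τ) - p q₂ (Δ q₁ τ))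
    -- dull algebroid condition: the anchor preserves brackets
    (hanchor : ∀ q₁ q₂ : Q, ρ (br q₁ q₂) = ⁅ρ q₁, ρ q₂⁆) :
    (∀ (q₁ q₂ q₃ : Q) (τ : Qd),
      p (br (br q₁ q₂) q₃ + br q₂ (br q₁ q₃) - br q₁ (br q₂ q₃)) τ
        = p q₃ (Δ q₁ (Δ q₂ τ) - Δ q₂ (Δ q₁ τ) - Δ (br q₁ q₂) τ)) ∧
    ((∀ (q₁ q₂ : Q) (τ : Qd),
        Δ q₁ (Δ q₂ τ) - Δ q₂ (Δ q₁ τ) - Δ (br q₁ q₂) τ = 0) ↔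
      (∀ q₁ q₂ q₃ : Q,
        br (br q₁ q₂) q₃ + br q₂ (br q₁ q₃) - br q₁ (br q₂ q₃) = 0)) := by
  have key : ∀ (q₁ q₂ q₃ : Q) (τ : Qd),
      p (br (br q₁ q₂) q₃ + br q₂ (br q₁ q₃) - br q₁ (br q₂ q₃)) τ
        = p q₃ (Δ q₁ (Δ q₂ τ) - Δ q₂ (Δ q₁ τ) - Δ (br q₁ q₂) τ) := by
    intro q₁ q₂ q₃ τ
    have h := hanchor q₁ q₂
    simp only [map_add, map_sub, LinearMap.add_apply, LinearMap.sub_apply, hbr, h,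
      Derivation.commutator_apply, map_sub]
    ring
  refine ⟨key, ?_, ?_⟩
  · intro hflat q₁ q₂ q₃
    apply p_nondeg_left
    intro τ
    rw [key, hflat, map_zero]
  · intro hjac q₁ q₂ τ
    apply p_nondeg_right
    intro q₃
    rw [← key, hjac, map_zero, LinearMap.zero_apply]
end

section
/- Let E → M be a Courant algebroid with metric connection ∇, basic connection ∇^bas_e X = [ρ(e),X] + ρ(∇_X e), and skew-symmetric dull bracket ⟦e,e'⟧_Δ = ⟦e,e'⟧ − β⁻¹ρ*⟨∇_·e, e'⟩. Then the basic curvature R^bas_Δ(e₁,e₂)X := −∇_X⟦e₁,e₂⟧ + ⟦∇_Xe₁, e₂⟧ + ⟦e₁, ∇_Xe₂⟧ + ∇_{∇^bas_{e₂}X}e₁ − ∇_{∇^bas_{e₁}X}e₂ − β⁻¹⟨∇_{∇^bas_· X}e₁, e₂⟩ is skew-symmetric in (e₁,e₂): R^bas_Δ(e₁,e₂) = −R^bas_Δ(e₂,e₁). -/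
/-- Let `E` be a Courant algebroid with metric connection `∇`, basic
connection `∇^bas_e X = [ρ(e),X] + ρ(∇_X e)`. Then the basic curvature
`R^bas_Δ(e₁,e₂)X = −∇_X⟦e₁,e₂⟧ + ⟦∇_Xe₁,e₂⟧ + ⟦e₁,∇_Xe₂⟧ + ∇_{∇^bas_{e₂}X}e₁
 − ∇_{∇^bas_{e₁}X}e₂ − β⁻¹⟨∇_{∇^bas_· X}e₁, e₂⟩`
is skew-symmetric in `(e₁,e₂)`. Here `binv` realises `β⁻¹` on (at least linear)
`E`-valued functionals, i.e. on sections of `E*`. -/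
theorem basic_curvature_skew
    {R E : Type*} [CommRing R] [Algebra ℝ R] [AddCommGroup E] [Module R E]
    (ρ : E →ₗ[R] Derivation ℝ R R)
    (pair : E →ₗ[R] E →ₗ[R] R)
    (pair_symm : ∀ e₁ e₂ : E, pair e₁ e₂ = pair e₂ e₁)
    (pair_nondeg : ∀ e : E, (∀ e' : E, pair e e' = 0) → e = 0)
    (br : E → E → E)
    (D : R → E) (hD : ∀ (f : R) (e : E), pair (D f) e = ρ e f)
    (ca1 : ∀ e₁ e₂ e₃ : E,
      br e₁ (br e₂ e₃) = br (br e₁ e₂) e₃ + br e₂ (br e₁ e₃))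
    (ca2 : ∀ e₁ e₂ e₃ : E,
      ρ e₁ (pair e₂ e₃) = pair (br e₁ e₂) e₃ + pair e₂ (br e₁ e₃))
    (ca3 : ∀ e₁ e₂ : E, br e₁ e₂ + br e₂ e₁ = D (pair e₁ e₂))
    (ca4 : ∀ e₁ e₂ : E, ρ (br e₁ e₂) = ⁅ρ e₁, ρ e₂⁆)
    (hρD : ∀ f : R, ρ (D f) = 0)
    -- β⁻¹ : Γ(E*) → Γ(E), realised on linear functionals on E:
    (binv : (E → R) → E)
    (hbinv : ∀ ξ : E → R,
      (∀ e e', ξ (e + e') = ξ e + ξ e') → (∀ (f : R) e, ξ (f • e) = f * ξ e) →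
      ∀ e : E, pair (binv ξ) e = ξ e)
    -- the metric connection ∇ : X(M) × Γ(E) → Γ(E)
    (nab : Derivation ℝ R R → E → E)
    (nab_add_left : ∀ X Y e, nab (X + Y) e = nab X e + nab Y e)
    (nab_add_right : ∀ X e e', nab X (e + e') = nab X e + nab X e')
    (nab_smul_left : ∀ (f : R) X e, nab (f • X) e = f • nab X e)
    (nab_leibniz : ∀ (X : Derivation ℝ R R) (f : R) (e : E),
      nab X (f • e) = f • nab X e + (X f) • e)
    (nab_metric : ∀ X e₁ e₂,
      X (pair e₁ e₂) = pair (nab X e₁) e₂ + pair e₁ (nab X e₂))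
    -- the basic connection
    (bas : E → Derivation ℝ R R → Derivation ℝ R R)
    (hbas : ∀ (e : E) (X : Derivation ℝ R R), bas e X = ⁅ρ e, X⁆ + ρ (nab X e))
    -- the basic curvature
    (Rbas : E → E → Derivation ℝ R R → E)
    (hRbas : ∀ (e₁ e₂ : E) (X : Derivation ℝ R R),
      Rbas e₁ e₂ X
        = - nab X (br e₁ e₂) + br (nab X e₁) e₂ + br e₁ (nab X e₂)
          + nab (bas e₂ X) e₁ - nab (bas e₁ X) e₂
          - binv (fun e => pair (nab (bas e X) e₁) e₂)) :
    ∀ (e₁ e₂ : E) (X : Derivation ℝ R R), Rbas e₁ e₂ X = - Rbas e₂ e₁ X := by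

  intro e₁ e₂ X
  -- `bas · X` is additive and `R`-linear in the first slot
  have bas_add : ∀ a b : E, bas (a + b) X = bas a X + bas b X := by
    intro a b
    rw [hbas, hbas, hbas, map_add, add_lie, nab_add_right, map_add]
    abel
  have bas_smul : ∀ (g : R) (a : E), bas (g • a) X = g • bas a X := by
    intro g a
    have h1 : ⁅g • ρ a, X⁆ = g • ⁅ρ a, X⁆ - (X g) • ρ a := by
      ext h
      simp only [Derivation.commutator_apply, Derivation.sub_apply,
        Derivation.smul_apply, Derivation.leibniz, smul_eq_mul]
      ring
    rw [hbas, hbas, nab_leibniz, map_add, map_smul, h1, smul_add]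
    simp only [map_smul]
    abel
  -- pointwise formula for the basic connection
  have basapp : ∀ (a : E) (g : R), bas a X g = ρ a (X g) - X (ρ a g) + ρ (nab X a) g := by
    intro a g
    rw [hbas]
    simp [Derivation.add_apply, Derivation.commutator_apply]
  -- the two `binv` functionals are linear
  have hb1 : ∀ e : E, pair (binv (fun e => pair (nab (bas e X) e₁) e₂)) e
      = pair (nab (bas e X) e₁) e₂ := by
    refine hbinv _ ?_ ?_
    · intro a b
      rw [bas_add, nab_add_left, map_add, LinearMap.add_apply]
    · intro g a
      rw [bas_smul, nab_smul_left, map_smul, LinearMap.smul_apply, smul_eq_mul]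
  have hb2 : ∀ e : E, pair (binv (fun e => pair (nab (bas e X) e₂) e₁)) e
      = pair (nab (bas e X) e₂) e₁ := by
    refine hbinv _ ?_ ?_
    · intro a b
      rw [bas_add, nab_add_left, map_add, LinearMap.add_apply]
    · intro g a
      rw [bas_smul, nab_smul_left, map_smul, LinearMap.smul_apply, smul_eq_mul]
  have key : ∀ e : E, pair (Rbas e₁ e₂ X + Rbas e₂ e₁ X) e = 0 := by
    intro e
    rw [map_add, LinearMap.add_apply, hRbas, hRbas]
    simp only [map_add, map_sub, map_neg, LinearMap.add_apply, LinearMap.sub_apply,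
      LinearMap.neg_apply, hb1, hb2]
    -- combine the ∇(⟦·,·⟧) terms
    have hsum1 : pair (nab X (br e₁ e₂)) e + pair (nab X (br e₂ e₁)) e
        = X (ρ e (pair e₁ e₂)) - ρ (nab X e) (pair e₁ e₂) := by
      rw [← LinearMap.add_apply, ← map_add, ← nab_add_right, ca3]
      have := nab_metric X (D (pair e₁ e₂)) e
      rw [hD, hD] at this
      linear_combination -this
    have hsum2 : pair (br (nab X e₁) e₂) e + pair (br e₂ (nab X e₁)) e
        = ρ e (pair (nab X e₁) e₂) := by
      rw [← LinearMap.add_apply, ← map_add, ca3, hD]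
    have hsum3 : pair (br e₁ (nab X e₂)) e + pair (br (nab X e₂) e₁) e
        = ρ e (pair e₁ (nab X e₂)) := by
      rw [← LinearMap.add_apply, ← map_add, ca3, hD]
    have hmet : ρ e (pair (nab X e₁) e₂) + ρ e (pair e₁ (nab X e₂))
        = ρ e (X (pair e₁ e₂)) := by
      rw [← map_add, ← nab_metric]
    have hxi : pair (nab (bas e X) e₁) e₂ + pair (nab (bas e X) e₂) e₁
        = ρ e (X (pair e₁ e₂)) - X (ρ e (pair e₁ e₂)) + ρ (nab X e) (pair e₁ e₂) := by
      rw [pair_symm (nab (bas e X) e₂) e₁, ← nab_metric, basapp]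
    linear_combination (-1 : R) * hsum1 + hsum2 + hsum3 + hmet - hxi
  have h0 : Rbas e₁ e₂ X + Rbas e₂ e₁ X = 0 := pair_nondeg _ (by
    intro e'
    exact key e')
  exact eq_neg_of_add_eq_zero_left h0
end
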